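/- arXiv:2306.10211 — 2 statements merged into one kernel-verified Lean document; each statement's English description precedes it below -/
import Mathlib

section
/- Let κ > 0 and ξ ∈ ℝ³ with 0 < |ξ| ≤ √2·κ. Then there exist two pairs of unit vectors (d₁, d₂) and (d̃₁, d̃₂) in S² × S² such that κ(d₁ + d₂) = κ(d̃₁ + d̃₂) = ξ and the three unit vectors ξ/|ξ|, (d₂ - d₁)/|d₂ - d₁|, (d̃₂ - d̃₁)/|d̃₂ - d̃₁| are mutually orthogonal. -/
/-!
Put `c = (2κ)⁻¹ ξ`, so `‖c‖ < 1`. For any unit vector `u ⟂ ξ` the points `c ± √(1 - ‖c‖²) u` lie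
on the unit sphere, sum to `2c`, and differ by a nonzero multiple of `u`. Since `ξᗮ` is at least
two-dimensional in `ℝ³`, taking `u` and then `ũ` from an orthonormal pair in `ξᗮ` gives both pairs.
-/

open RealInnerProductSpace Module

theorem exists_orthonormal_pair_orthogonal {E : Type*} [NormedAddCommGroup E]
    [InnerProductSpace ℝ E] [FiniteDimensional ℝ E] (hE : 3 ≤ finrank ℝ E) (ξ : E) :
    ∃ v w : E, ‖v‖ = 1 ∧ ‖w‖ = 1 ∧ ⟪v, w⟫ = 0 ∧ ⟪ξ, v⟫ = 0 ∧ ⟪ξ, w⟫ = 0 := by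
  have hK : 2 ≤ finrank ℝ (ℝ ∙ ξ)ᗮ := by
    have hline : finrank ℝ (ℝ ∙ ξ) ≤ 1 :=
      (finrank_span_le_card ({ξ} : Set E)).trans (by simp)
    have := Submodule.finrank_add_finrank_orthogonal (ℝ ∙ ξ)
    omega
  let b := stdOrthonormalBasis ℝ (ℝ ∙ ξ)ᗮ
  have h01 : (⟨0, by omega⟩ : Fin (finrank ℝ (ℝ ∙ ξ)ᗮ)) ≠ ⟨1, by omega⟩ := by simp
  refine ⟨b ⟨0, by omega⟩, b ⟨1, by omega⟩, b.orthonormal.1 _, b.orthonormal.1 _,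
    b.orthonormal.2 h01, ?_, ?_⟩ <;>
  exact Submodule.inner_right_of_mem_orthogonal (Submodule.mem_span_singleton_self ξ)
    (Subtype.prop _)

theorem exists_unit_pair_smul_add_eq_of_inner_eq_zero {E : Type*} [NormedAddCommGroup E]
    [InnerProductSpace ℝ E] {κ : ℝ} (hκ : 0 < κ) {ξ u : E} (hξ : ‖ξ‖ < 2 * κ)
    (hu : ‖u‖ = 1) (hξu : ⟪ξ, u⟫ = 0) :
    ∃ d₁ d₂ : E, ‖d₁‖ = 1 ∧ ‖d₂‖ = 1 ∧ κ • (d₁ + d₂) = ξ ∧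
      ∃ r : ℝ, r ≠ 0 ∧ d₂ - d₁ = r • u := by
  set c := (2 * κ)⁻¹ • ξ
  have hc : ‖c‖ < 1 := by
    rw [norm_smul, Real.norm_of_nonneg (by positivity), inv_mul_lt_one₀ (by positivity)]
    exact hξ
  have hcu : ⟪c, u⟫ = 0 := by rw [real_inner_smul_left, hξu, mul_zero]
  set s := √(1 - ‖c‖ ^ 2)
  have hs : 0 < s := Real.sqrt_pos.mpr (by nlinarith [norm_nonneg c])
  have hunit : ∀ t : ℝ, t ^ 2 = s ^ 2 → ‖c + t • u‖ = 1 := fun t ht => by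
    have hsq : ‖c + t • u‖ ^ 2 = 1 := by
      rw [norm_add_sq_real, real_inner_smul_right, hcu, norm_smul t u, hu, mul_one,
        Real.norm_eq_abs, sq_abs, ht, Real.sq_sqrt (by nlinarith [norm_nonneg c])]
      ring
    exact (pow_eq_one_iff_of_nonneg (norm_nonneg _) two_ne_zero).mp hsq
  have hsum : κ • (c + (-s) • u + (c + s • u)) = ξ := by
    rw [show c + -s • u + (c + s • u) = (2 : ℝ) • c by module, smul_smul, smul_smul,
      show κ * 2 * (2 * κ)⁻¹ = 1 by field_simp, one_smul]
  exact ⟨c + (-s) • u, c + s • u, hunit _ (neg_sq s), hunit _ rfl, hsum, 2 * s, by positivity,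
    by module⟩

theorem stmt6_general (κ : ℝ) (hκ : 0 < κ) (ξ : EuclideanSpace ℝ (Fin 3))
    (hξ : ‖ξ‖ ≤ Real.sqrt 2 * κ) :
    ∃ d₁ d₂ e₁ e₂ : EuclideanSpace ℝ (Fin 3),
      ‖d₁‖ = 1 ∧ ‖d₂‖ = 1 ∧ ‖e₁‖ = 1 ∧ ‖e₂‖ = 1 ∧
      κ • (d₁ + d₂) = ξ ∧ κ • (e₁ + e₂) = ξ ∧
      d₂ - d₁ ≠ 0 ∧ e₂ - e₁ ≠ 0 ∧
      (⟪ξ, d₂ - d₁⟫ : ℝ) = 0 ∧ (⟪ξ, e₂ - e₁⟫ : ℝ) = 0 ∧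
      (⟪d₂ - d₁, e₂ - e₁⟫ : ℝ) = 0 := by
  have hξ' : ‖ξ‖ < 2 * κ := hξ.trans_lt <| mul_lt_mul_of_pos_right
    (by rw [Real.sqrt_lt' two_pos]; norm_num) hκ
  obtain ⟨v, w, hv, hw, hvw, hξv, hξw⟩ := exists_orthonormal_pair_orthogonal (by simp) ξ
  obtain ⟨d₁, d₂, hd₁, hd₂, hd, r, hr, hdv⟩ :=
    exists_unit_pair_smul_add_eq_of_inner_eq_zero hκ hξ' hv hξv
  obtain ⟨e₁, e₂, he₁, he₂, he, s, hs, hew⟩ :=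
    exists_unit_pair_smul_add_eq_of_inner_eq_zero hκ hξ' hw hξw
  refine ⟨d₁, d₂, e₁, e₂, hd₁, hd₂, he₁, he₂, hd, he, ?_, ?_, ?_, ?_, ?_⟩
  · rw [hdv]; exact smul_ne_zero hr (norm_ne_zero_iff.mp (by simp [hv]))
  · rw [hew]; exact smul_ne_zero hs (norm_ne_zero_iff.mp (by simp [hw]))
  · rw [hdv, real_inner_smul_right, hξv, mul_zero]
  · rw [hew, real_inner_smul_right, hξw, mul_zero]
  · rw [hdv, hew, real_inner_smul_left, real_inner_smul_right, hvw, mul_zero, mul_zero]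

/-- A nonzero frequency `ξ` with `|ξ| ≤ √2 κ` can be written as `κ(d₁+d₂) = κ(e₁+e₂)`
with unit vectors such that the directions `ξ/|ξ|`, `(d₂-d₁)/|d₂-d₁|`, `(e₂-e₁)/|e₂-e₁|`
are mutually orthogonal (in particular the differences are nonzero). -/
theorem stmt6 (κ : ℝ) (hκ : 0 < κ) (ξ : EuclideanSpace ℝ (Fin 3))
    (hξ0 : 0 < ‖ξ‖) (hξ : ‖ξ‖ ≤ Real.sqrt 2 * κ) :
    ∃ d₁ d₂ e₁ e₂ : EuclideanSpace ℝ (Fin 3),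
      ‖d₁‖ = 1 ∧ ‖d₂‖ = 1 ∧ ‖e₁‖ = 1 ∧ ‖e₂‖ = 1 ∧
      κ • (d₁ + d₂) = ξ ∧ κ • (e₁ + e₂) = ξ ∧
      d₂ - d₁ ≠ 0 ∧ e₂ - e₁ ≠ 0 ∧
      (⟪ξ, d₂ - d₁⟫ : ℝ) = 0 ∧ (⟪ξ, e₂ - e₁⟫ : ℝ) = 0 ∧
      (⟪d₂ - d₁, e₂ - e₁⟫ : ℝ) = 0 :=
  stmt6_general κ hκ ξ hξ
end

section
/- Let s > 0 and let β = 2s/(3+2s), α = 6/(3+2s). Suppose ε ∈ (0, e^{-e}), K ≥ (1/(2σ)) ln|ln ε| for some σ > 0, and |V̂(ξ)|² ≤ C(ε² + K^{-2}) for all |ξ| ≤ 2K, with ‖V‖_{H^s(ℝ³)} ≤ Q. Then ‖V‖²_{L²(ℝ³)} ≤ C' ( K^α ε² + K^{-β} (ln|ln ε|)^{-β} ) with C' depending only on s, C, Q, σ. -/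
/-!
By Plancherel, split `‖V̂‖²_{L²}` at the radius `ρ = K^{2/(3+2s)} ≤ 2K`. On the ball the
pointwise bound contributes at most `C |B₁| ρ³ (ε² + K⁻²) = C |B₁| (K^α ε² + K^{-2β})`; off the
ball `1 ≤ (1+ρ²)^{-s} (1+|ξ|²)^s`, so the `H^s` bound contributes at most `Q² ρ^{-2s} = Q² K^{-2β}`
(this is what the choice of `ρ` balances). Finally `K ≥ ln|ln ε| / (2σ)` gives
`K^{-β} ≤ (2σ)^β (ln|ln ε|)^{-β}`, which trades one factor of `K^{-2β} = K^{-β} K^{-β}`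
for the logarithmic one.
-/

open MeasureTheory Metric Module

theorem setIntegral_le_measureReal_mul {α : Type*} [MeasurableSpace α] {μ : Measure α}
    {g : α → ℝ} {S : Set α} {M : ℝ} (hS : MeasurableSet S) (hSμ : μ S ≠ ⊤)
    (hg : IntegrableOn g S μ) (hM : ∀ ξ ∈ S, g ξ ≤ M) :
    ∫ ξ in S, g ξ ∂μ ≤ μ.real S * M := by
  calc ∫ ξ in S, g ξ ∂μ ≤ ∫ _ in S, M ∂μ :=
        setIntegral_mono_on hg (integrableOn_const hSμ) hS hM
    _ = μ.real S * M := by rw [setIntegral_const, smul_eq_mul]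

section FrequencySplitting

variable {E : Type*} [NormedAddCommGroup E] [MeasurableSpace E] [OpensMeasurableSpace E]
  {μ : Measure E} {g : E → ℝ} {s ρ : ℝ}

theorem setIntegral_compl_ball_le_rpow_mul (hs : 0 ≤ s) (hρ : 0 ≤ ρ) (hg0 : ∀ ξ, 0 ≤ g ξ)
    (hg : Integrable g μ) (hwg : Integrable (fun ξ => (1 + ‖ξ‖ ^ 2) ^ s * g ξ) μ) :
    ∫ ξ in (ball 0 ρ)ᶜ, g ξ ∂μ ≤ (1 + ρ ^ 2) ^ (-s) * ∫ ξ, (1 + ‖ξ‖ ^ 2) ^ s * g ξ ∂μ := by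
  have hweight : ∀ ξ ∈ (ball (0 : E) ρ)ᶜ, g ξ ≤ (1 + ρ ^ 2) ^ (-s) * ((1 + ‖ξ‖ ^ 2) ^ s * g ξ) := by
    intro ξ hξ
    have hρξ : ρ ≤ ‖ξ‖ := by simpa using hξ
    have hmono : (1 + ρ ^ 2) ^ s ≤ (1 + ‖ξ‖ ^ 2) ^ s :=
      Real.rpow_le_rpow (by positivity) (by nlinarith) hs
    rw [Real.rpow_neg (by positivity), ← mul_assoc, inv_mul_eq_div]
    exact le_mul_of_one_le_left (hg0 ξ) ((one_le_div (by positivity)).2 hmono)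
  calc ∫ ξ in (ball 0 ρ)ᶜ, g ξ ∂μ
      ≤ ∫ ξ in (ball 0 ρ)ᶜ, (1 + ρ ^ 2) ^ (-s) * ((1 + ‖ξ‖ ^ 2) ^ s * g ξ) ∂μ :=
        setIntegral_mono_on hg.integrableOn (hwg.const_mul _).integrableOn
          measurableSet_ball.compl hweight
    _ = (1 + ρ ^ 2) ^ (-s) * ∫ ξ in (ball 0 ρ)ᶜ, (1 + ‖ξ‖ ^ 2) ^ s * g ξ ∂μ :=
        integral_const_mul _ _
    _ ≤ (1 + ρ ^ 2) ^ (-s) * ∫ ξ, (1 + ‖ξ‖ ^ 2) ^ s * g ξ ∂μ := by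
        refine mul_le_mul_of_nonneg_left (setIntegral_le_integral hwg (ae_of_all _ fun ξ => ?_))
          (by positivity)
        have := hg0 ξ
        positivity

theorem integral_le_of_le_on_ball [NormedSpace ℝ E] [FiniteDimensional ℝ E] [BorelSpace E]
    (μ : Measure E) [μ.IsAddHaarMeasure] {M : ℝ} (hs : 0 ≤ s) (hρ : 0 < ρ)
    (hg0 : ∀ ξ, 0 ≤ g ξ) (hg : Integrable g μ)
    (hwg : Integrable (fun ξ => (1 + ‖ξ‖ ^ 2) ^ s * g ξ) μ) (hM : ∀ ξ, ‖ξ‖ < ρ → g ξ ≤ M) :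
    ∫ ξ, g ξ ∂μ ≤ ρ ^ finrank ℝ E * μ.real (ball 0 1) * M +
      (1 + ρ ^ 2) ^ (-s) * ∫ ξ, (1 + ‖ξ‖ ^ 2) ^ s * g ξ ∂μ := by
  have hball : μ.real (ball 0 ρ) = ρ ^ finrank ℝ E * μ.real (ball 0 1) := by
    rw [measureReal_def, Measure.addHaar_ball_of_pos μ 0 hρ, ENNReal.toReal_mul,
      ENNReal.toReal_ofReal (by positivity), measureReal_def]
  rw [← integral_add_compl measurableSet_ball hg, ← hball]
  gcongr
  · exact setIntegral_le_measureReal_mul measurableSet_ball measure_ball_lt_top.ne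
      hg.integrableOn fun ξ hξ => hM ξ (by simpa using hξ)
  · exact setIntegral_compl_ball_le_rpow_mul hs hρ.le hg0 hg hwg

end FrequencySplitting

theorem one_lt_log_abs_log {ε : ℝ} (hε : 0 < ε) (hεe : ε < Real.exp (-Real.exp 1)) :
    1 < Real.log |Real.log ε| := by
  have hlog : Real.log ε < -Real.exp 1 := by
    simpa using Real.log_lt_log hε hεe
  have habs : Real.exp 1 < |Real.log ε| := by
    rw [abs_of_neg (by linarith [Real.exp_pos 1])]
    linarith
  simpa using Real.log_lt_log (Real.exp_pos 1) habs

theorem rpow_neg_two_mul_le {K L a β : ℝ} (hK : 0 < K) (hL : 0 < L) (ha : 0 < a) (hβ : 0 ≤ β)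
    (hLK : L / a ≤ K) : K ^ (-(2 * β)) ≤ a ^ β * (K ^ (-β) * L ^ (-β)) := by
  have hKL : K ^ (-β) ≤ a ^ β * L ^ (-β) := by
    calc K ^ (-β) ≤ (L / a) ^ (-β) :=
          Real.rpow_le_rpow_of_nonpos (by positivity) hLK (by linarith)
      _ = a ^ β * L ^ (-β) := by
          rw [Real.div_rpow hL.le ha.le, Real.rpow_neg ha.le, div_inv_eq_mul, mul_comm]
  calc K ^ (-(2 * β)) = K ^ (-β) * K ^ (-β) := by rw [← Real.rpow_add hK]; ring_nf
    _ ≤ K ^ (-β) * (a ^ β * L ^ (-β)) := by gcongr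
    _ = a ^ β * (K ^ (-β) * L ^ (-β)) := by ring

section Exponents

variable {s K : ℝ}

theorem rpow_two_div_pow_three (hK : 0 ≤ K) :
    (K ^ (2 / (3 + 2 * s))) ^ 3 = K ^ (6 / (3 + 2 * s)) := by
  rw [← Real.rpow_natCast, ← Real.rpow_mul hK]
  ring_nf

theorem rpow_two_div_le_two_mul (hs : 0 ≤ s) (hK : 1 ≤ K) : K ^ (2 / (3 + 2 * s)) ≤ 2 * K := by
  have : K ^ (2 / (3 + 2 * s)) ≤ K ^ (1 : ℝ) :=
    Real.rpow_le_rpow_of_exponent_le hK (by rw [div_le_one (by linarith)]; linarith)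
  rw [Real.rpow_one] at this
  linarith

theorem one_add_rpow_two_div_sq_rpow_neg_le (hs : 0 ≤ s) (hK : 1 ≤ K) :
    (1 + (K ^ (2 / (3 + 2 * s))) ^ 2) ^ (-s) ≤ K ^ (-(2 * (2 * s / (3 + 2 * s)))) := by
  have hK0 : 0 < K := by linarith
  calc (1 + (K ^ (2 / (3 + 2 * s))) ^ 2) ^ (-s) ≤ ((K ^ (2 / (3 + 2 * s))) ^ 2) ^ (-s) :=
        Real.rpow_le_rpow_of_nonpos (by positivity) (by linarith) (by linarith)
    _ = K ^ (-(2 * (2 * s / (3 + 2 * s)))) := by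
        rw [← Real.rpow_natCast, ← Real.rpow_mul hK0.le, ← Real.rpow_mul hK0.le]
        ring_nf

theorem rpow_six_div_mul_rpow_neg_two (hs : 0 ≤ s) (hK : 0 < K) :
    K ^ (6 / (3 + 2 * s)) * K ^ (-2 : ℝ) = K ^ (-(2 * (2 * s / (3 + 2 * s)))) := by
  rw [← Real.rpow_add hK]
  congr 1
  field_simp
  ring

end Exponents

theorem integral_le_of_le_on_ball_two_mul {E : Type*} [NormedAddCommGroup E]
    [NormedSpace ℝ E] [FiniteDimensional ℝ E] [MeasurableSpace E] [BorelSpace E]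
    (μ : Measure E) [μ.IsAddHaarMeasure] (hE : finrank ℝ E = 3) {g : E → ℝ} {s C Q ε K : ℝ}
    (hs : 0 ≤ s) (hK : 1 ≤ K) (hg0 : ∀ ξ, 0 ≤ g ξ) (hg : Integrable g μ)
    (hwg : Integrable (fun ξ => (1 + ‖ξ‖ ^ 2) ^ s * g ξ) μ)
    (hQ : ∫ ξ, (1 + ‖ξ‖ ^ 2) ^ s * g ξ ∂μ ≤ Q ^ 2)
    (hM : ∀ ξ, ‖ξ‖ ≤ 2 * K → g ξ ≤ C * (ε ^ 2 + K ^ (-2 : ℝ))) :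
    ∫ ξ, g ξ ∂μ ≤ μ.real (ball 0 1) * C * (K ^ (6 / (3 + 2 * s)) * ε ^ 2) +
      (μ.real (ball 0 1) * C + Q ^ 2) * K ^ (-(2 * (2 * s / (3 + 2 * s)))) := by
  have hK0 : 0 < K := by linarith
  have hsplit := integral_le_of_le_on_ball μ hs (by positivity) hg0 hg hwg
    (fun ξ hξ => hM ξ (hξ.le.trans (rpow_two_div_le_two_mul hs hK)))
  have hlow : K ^ (6 / (3 + 2 * s)) * μ.real (ball 0 1) * (C * (ε ^ 2 + K ^ (-2 : ℝ))) =
      μ.real (ball 0 1) * C * (K ^ (6 / (3 + 2 * s)) * ε ^ 2) +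
        μ.real (ball 0 1) * C * K ^ (-(2 * (2 * s / (3 + 2 * s)))) := by
    rw [← rpow_six_div_mul_rpow_neg_two hs hK0]
    ring
  rw [hE, rpow_two_div_pow_three hK0.le, hlow] at hsplit
  have hhigh := mul_le_mul (one_add_rpow_two_div_sq_rpow_neg_le hs hK) hQ
    (integral_nonneg fun ξ => by have := hg0 ξ; positivity) (by positivity)
  linarith

theorem stmt19_general (s C Q σ : ℝ) (hs : 0 < s) (hC : 0 < C) (hσ : 0 < σ) :
    ∃ C' > (0 : ℝ), ∀ (ε K : ℝ) (V Vhat : EuclideanSpace ℝ (Fin 3) → ℂ),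
      0 < ε → ε < Real.exp (-Real.exp 1) →
      1 ≤ K → (1 / (2 * σ)) * Real.log |Real.log ε| ≤ K →
      Measurable Vhat →
      Integrable (fun x => ‖V x‖ ^ 2) →
      Integrable (fun ξ : EuclideanSpace ℝ (Fin 3) => ‖Vhat ξ‖ ^ 2) →
      (∫ x, ‖V x‖ ^ 2) = (∫ ξ, ‖Vhat ξ‖ ^ 2) →
      Integrable (fun ξ : EuclideanSpace ℝ (Fin 3) => (1 + ‖ξ‖ ^ 2) ^ s * ‖Vhat ξ‖ ^ 2) →
      (∫ ξ : EuclideanSpace ℝ (Fin 3), (1 + ‖ξ‖ ^ 2) ^ s * ‖Vhat ξ‖ ^ 2) ≤ Q ^ 2 →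
      (∀ ξ : EuclideanSpace ℝ (Fin 3), ‖ξ‖ ≤ 2 * K →
        ‖Vhat ξ‖ ^ 2 ≤ C * (ε ^ 2 + K ^ (-2 : ℝ))) →
      (∫ x, ‖V x‖ ^ 2) ≤
        C' * (K ^ (6 / (3 + 2 * s)) * ε ^ 2 +
          K ^ (-(2 * s / (3 + 2 * s))) *
            (Real.log |Real.log ε|) ^ (-(2 * s / (3 + 2 * s)))) := by
  set β := 2 * s / (3 + 2 * s)
  set c := volume.real (ball (0 : EuclideanSpace ℝ (Fin 3)) 1)
  have hc : 0 < c :=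
    ENNReal.toReal_pos (measure_ball_pos volume 0 one_pos).ne' measure_ball_lt_top.ne
  refine ⟨(c * C + Q ^ 2) * (1 + (2 * σ) ^ β), by positivity, ?_⟩
  intro ε K V Vhat hε hεe hK hLK _ _ hVhat hPlancherel hwVhat hHs hpt
  set L := Real.log |Real.log ε|
  have hL : 0 < L := by linarith [one_lt_log_abs_log hε hεe]
  have hK0 : 0 < K := by linarith
  have hsplit := integral_le_of_le_on_ball_two_mul volume finrank_euclideanSpace_fin hs.le hK
    (fun ξ => sq_nonneg ‖Vhat ξ‖) hVhat hwVhat hHs hpt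
  have hdecay := rpow_neg_two_mul_le hK0 hL (by positivity : 0 < 2 * σ) (by positivity : 0 ≤ β)
    (by rwa [div_eq_inv_mul, ← one_div])
  have hA : 0 ≤ c * C + Q ^ 2 := by positivity
  have hX : 0 ≤ K ^ (6 / (3 + 2 * s)) * ε ^ 2 := by positivity
  have hY : 0 ≤ K ^ (-β) * L ^ (-β) := by positivity
  have h2σ : 0 ≤ (2 * σ) ^ β := by positivity
  rw [hPlancherel]
  nlinarith [mul_le_mul_of_nonneg_left hdecay hA, mul_nonneg (sq_nonneg Q) hX,
    mul_nonneg hA hY, mul_nonneg (mul_nonneg hA h2σ) hX]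

/-- Case 2 of the increasing stability argument: if `K ≥ (1/(2σ)) ln|ln ε|` (and `K ≥ 1`),
a pointwise bound `|V̂(ξ)|² ≤ C(ε² + K⁻²)` for `|ξ| ≤ 2K` together with the `H^s` bound
yields `‖V‖²_{L²} ≤ C' (K^α ε² + K^{-β} (ln|ln ε|)^{-β})` with `α = 6/(3+2s)`,
`β = 2s/(3+2s)` and `C'` depending only on `s, C, Q, σ`. (Plancherel is recorded as a
hypothesis relating `V` and its Fourier transform `Vhat`.) -/
theorem stmt19 (s C Q σ : ℝ) (hs : 0 < s) (hC : 0 < C) (hQ : 0 < Q) (hσ : 0 < σ) :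
    ∃ C' > (0 : ℝ), ∀ (ε K : ℝ) (V Vhat : EuclideanSpace ℝ (Fin 3) → ℂ),
      0 < ε → ε < Real.exp (-Real.exp 1) →
      1 ≤ K → (1 / (2 * σ)) * Real.log |Real.log ε| ≤ K →
      Measurable Vhat →
      Integrable (fun x => ‖V x‖ ^ 2) →
      Integrable (fun ξ : EuclideanSpace ℝ (Fin 3) => ‖Vhat ξ‖ ^ 2) →
      (∫ x, ‖V x‖ ^ 2) = (∫ ξ, ‖Vhat ξ‖ ^ 2) →
      Integrable (fun ξ : EuclideanSpace ℝ (Fin 3) => (1 + ‖ξ‖ ^ 2) ^ s * ‖Vhat ξ‖ ^ 2) →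
      (∫ ξ : EuclideanSpace ℝ (Fin 3), (1 + ‖ξ‖ ^ 2) ^ s * ‖Vhat ξ‖ ^ 2) ≤ Q ^ 2 →
      (∀ ξ : EuclideanSpace ℝ (Fin 3), ‖ξ‖ ≤ 2 * K →
        ‖Vhat ξ‖ ^ 2 ≤ C * (ε ^ 2 + K ^ (-2 : ℝ))) →
      (∫ x, ‖V x‖ ^ 2) ≤
        C' * (K ^ (6 / (3 + 2 * s)) * ε ^ 2 +
          K ^ (-(2 * s / (3 + 2 * s))) *
            (Real.log |Real.log ε|) ^ (-(2 * s / (3 + 2 * s)))) :=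
  stmt19_general s C Q σ hs hC hσ
end
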